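/- For every n ≥ 2, in the target group G_A(n) obtained by factoring the progenitor 2^{⋆n} : Sₙ (acting on 1-element subsets of {1,…,n}) by the relator (t_{1}·(1 2))³, the image of the control group Sym(Fin n) under the canonical quotient map has index at most n + 1 in G_A(n). (Equivalently, every element of G_A(n) can be written as π·w with π in the image of Sym(Fin n) and w a word of length at most one in the symmetric generators.) -/

import Mathlib

open Monoid Pointwise

/-- The type of `k`-element subsets of `Fin n`. -/
abbrev KSub (n k : ℕ) := {s : Finset (Fin n) // s.card = k}

/-- The free product of copies of `ℤ/2ℤ` indexed by the `k`-element subsets of `Fin n`. -/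
abbrev FP (n k : ℕ) := Monoid.CoprodI (fun _ : KSub n k => Multiplicative (ZMod 2))

/-- The symmetric generator `t_S`. -/
def tFP {n k : ℕ} (S : KSub n k) : FP n k :=
  Monoid.CoprodI.of (i := S) (Multiplicative.ofAdd (1 : ZMod 2))

/-- The action of a permutation of `Fin n` on the `k`-element subsets. -/
instance KSub.instMulAction (n k : ℕ) : MulAction (Equiv.Perm (Fin n)) (KSub n k) where
  smul σ S := ⟨σ • S.1, by rw [Finset.card_smul_finset]; exact S.2⟩
  one_smul S := Subtype.ext (one_smul _ S.1)
  mul_smul σ τ S := Subtype.ext (mul_smul σ τ S.1)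

/-- The endomorphism of the free product induced by a permutation of `Fin n`. -/
def fpHom {n k : ℕ} (σ : Equiv.Perm (Fin n)) : FP n k →* FP n k :=
  Monoid.CoprodI.lift (fun S => Monoid.CoprodI.of (M := fun _ : KSub n k => Multiplicative (ZMod 2)) (i := σ • S))

lemma fpHom_comp {n k : ℕ} (σ τ : Equiv.Perm (Fin n)) :
    (fpHom (n := n) (k := k) σ).comp (fpHom τ) = fpHom (σ * τ) := by
  apply Monoid.CoprodI.ext_hom
  intro S
  ext x
  simp [fpHom, Monoid.CoprodI.lift_of, mul_smul]

lemma fpHom_one {n k : ℕ} : fpHom (n := n) (k := k) 1 = MonoidHom.id _ := by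
  apply Monoid.CoprodI.ext_hom
  intro S
  ext x
  simp [fpHom, Monoid.CoprodI.lift_of]

/-- The action of `Sym(Fin n)` on the free product, permuting the free factors. -/
def fpAut (n k : ℕ) : Equiv.Perm (Fin n) →* MulAut (FP n k) :=
  MonoidHom.mk' (fun σ =>
    { toFun := fpHom σ
      invFun := fpHom σ⁻¹
      left_inv := fun x => by
        have h := fpHom_comp (n := n) (k := k) σ⁻¹ σ
        rw [inv_mul_cancel, fpHom_one] at h
        exact DFunLike.congr_fun h x
      right_inv := fun x => by
        have h := fpHom_comp (n := n) (k := k) σ σ⁻¹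
        rw [mul_inv_cancel, fpHom_one] at h
        exact DFunLike.congr_fun h x
      map_mul' := map_mul _ })
    (fun σ τ => by
      ext x
      exact (DFunLike.congr_fun (fpHom_comp (n := n) (k := k) σ τ) x).symm)

/-- The progenitor `2^{⋆C(n,k)} : Sₙ`. -/
abbrev Progenitor (n k : ℕ) := FP n k ⋊[fpAut n k] Equiv.Perm (Fin n)

/-- The target group: the quotient of the progenitor by the normal closure of the
single relator `(t_{S₀}·σ₀)³`. -/
abbrev TargetGroup (n k : ℕ) (S₀ : KSub n k) (σ₀ : Equiv.Perm (Fin n)) :=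
  Progenitor n k ⧸ Subgroup.normalClosure
    {(SemidirectProduct.inl (tFP S₀) * SemidirectProduct.inr σ₀) ^ 3}

/-- The image in the target group of the symmetric generator `t_S`. -/
def tbar {n k : ℕ} (S₀ : KSub n k) (σ₀ : Equiv.Perm (Fin n)) (S : KSub n k) :
    TargetGroup n k S₀ σ₀ :=
  QuotientGroup.mk (SemidirectProduct.inl (tFP S))

/-- The canonical map from the control group `Sₙ` to the target group. -/
def pbar {n k : ℕ} (S₀ : KSub n k) (σ₀ : Equiv.Perm (Fin n)) :
    Equiv.Perm (Fin n) →* TargetGroup n k S₀ σ₀ :=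
  (QuotientGroup.mk' _).comp (SemidirectProduct.inr)

/-! Conjugation by `π` sends `t_a` to `t_{π a}`, and each `t_a` is an involution. For
`s = (u v)` the relator `(t_u s)³ = 1` says `(t_u s)² = s t_u`, i.e. `t_u t_v = t_v s`; conjugating
by a permutation (`Sₙ` is 2-transitive) gives `t_a t_b ∈ t_b Sₙ` for all `a ≠ b`. So left
multiplication by the generators permutes the `n + 1` cosets `Sₙ` and `t_a Sₙ`, which therefore
exhaust the group. -/

theorem Subgroup.index_pos_and_le_card_of_forall_eq_mul {G ι : Type*} [Group G] [Finite ι]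
    {H : Subgroup G} (r : ι → G) (hr : ∀ g : G, ∃ i, ∃ h ∈ H, g = r i * h) :
    0 < H.index ∧ H.index ≤ Nat.card ι := by
  have hsurj : Function.Surjective fun i => (r i : G ⧸ H) := by
    rintro ⟨g⟩
    obtain ⟨i, h, hh, rfl⟩ := hr g
    exact ⟨i, (QuotientGroup.mk_mul_of_mem (r i) hh).symm⟩
  have : Finite (G ⧸ H) := Finite.of_surjective _ hsurj
  rw [Subgroup.index_eq_card]
  exact ⟨Nat.card_pos, Nat.card_le_card_of_surjective _ hsurj⟩

section Relations

variable {n k : ℕ} {S₀ : KSub n k} {σ₀ : Equiv.Perm (Fin n)}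

theorem tbar_smul (σ : Equiv.Perm (Fin n)) (S : KSub n k) :
    tbar S₀ σ₀ (σ • S) = pbar S₀ σ₀ σ * tbar S₀ σ₀ S * (pbar S₀ σ₀ σ)⁻¹ := by
  have hσ : fpAut n k σ (tFP S) = tFP (σ • S) := by
    simp [fpAut, fpHom, tFP]
  rw [tbar, ← hσ, SemidirectProduct.inl_aut, map_inv]
  rfl

theorem tbar_mul_self (S : KSub n k) : tbar S₀ σ₀ S * tbar S₀ σ₀ S = 1 := by
  have hS : tFP S * tFP S = 1 := by
    rw [tFP, ← map_mul]
    exact map_one _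
  rw [tbar, ← QuotientGroup.mk_mul, ← map_mul, hS, map_one, QuotientGroup.mk_one]

theorem tbar_mul_pbar_pow_three : (tbar S₀ σ₀ S₀ * pbar S₀ σ₀ σ₀) ^ 3 = 1 :=
  (QuotientGroup.eq_one_iff _).mpr (Subgroup.subset_normalClosure rfl)

@[elab_as_elim]
theorem TargetGroup.induction_left {motive : TargetGroup n k S₀ σ₀ → Prop}
    (g : TargetGroup n k S₀ σ₀) (perm : ∀ σ, motive (pbar S₀ σ₀ σ))
    (tbar_mul : ∀ S g, motive g → motive (tbar S₀ σ₀ S * g)) : motive g := by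
  induction g using QuotientGroup.induction_on with
  | H p =>
  rw [← SemidirectProduct.inl_left_mul_inr_right p]
  induction p.left using Monoid.CoprodI.induction_left with
  | one =>
    rw [map_one, one_mul]
    exact perm p.right
  | @mul S m x ih =>
    obtain rfl | rfl : m = 1 ∨ m = Multiplicative.ofAdd 1 := by revert m; decide
    · simpa using ih
    · rw [map_mul, mul_assoc, QuotientGroup.mk_mul]
      exact tbar_mul S _ ih

end Relations

def KSub.single {n : ℕ} (a : Fin n) : KSub n 1 := ⟨{a}, Finset.card_singleton a⟩

theorem KSub.smul_single {n : ℕ} (σ : Equiv.Perm (Fin n)) (a : Fin n) :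
    σ • KSub.single a = KSub.single (σ a) :=
  Subtype.ext (Finset.smul_finset_singleton _)

theorem KSub.exists_eq_single {n : ℕ} (S : KSub n 1) : ∃ a, S = KSub.single a := by
  obtain ⟨a, ha⟩ := Finset.card_eq_one.mp S.2
  exact ⟨a, Subtype.ext ha⟩

section Transposition

variable {n : ℕ} {u v : Fin n}

local notation "𝐭" a:max => tbar (KSub.single u) (Equiv.swap u v) (KSub.single a)
local notation "𝐩" σ:max => pbar (KSub.single u) (Equiv.swap u v) σ

theorem tbar_single_mul_tbar_single : 𝐭 u * 𝐭 v = 𝐭 v * 𝐩 (Equiv.swap u v) := by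
  set s := 𝐩 (Equiv.swap u v)
  have hs : s⁻¹ = s := by rw [← map_inv, Equiv.swap_inv]
  have hss : s * s = 1 := by rw [← map_mul, Equiv.swap_mul_self, map_one]
  have hv : 𝐭 v = s * 𝐭 u * s⁻¹ := by
    rw [← tbar_smul, KSub.smul_single, Equiv.swap_apply_left]
  calc 𝐭 u * 𝐭 v = (𝐭 u * s) ^ 3 * (s⁻¹ * (𝐭 u)⁻¹ * s⁻¹ * s⁻¹) := by
        rw [hv, pow_three (𝐭 u * s)]; group
    _ = s * 𝐭 u := by
      rw [tbar_mul_pbar_pow_three, one_mul, hs, inv_eq_of_mul_eq_one_right (tbar_mul_self _),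
        mul_assoc, hss, mul_one]
    _ = 𝐭 v * s := by rw [hv]; group

theorem exists_tbar_mul_tbar_eq (huv : u ≠ v) {a b : Fin n} (hab : a ≠ b) :
    ∃ ρ, 𝐭 a * 𝐭 b = 𝐭 b * 𝐩 ρ := by
  obtain ⟨π, rfl, rfl⟩ :=
    MulAction.is_two_pretransitive_iff.mp (Equiv.Perm.isMultiplyPretransitive (Fin n) 2) huv hab
  refine ⟨π * Equiv.swap u v * π⁻¹, ?_⟩
  simp only [Equiv.Perm.smul_def, ← KSub.smul_single, tbar_smul, map_mul, map_inv]
  calc 𝐩 π * 𝐭 u * (𝐩 π)⁻¹ * (𝐩 π * 𝐭 v * (𝐩 π)⁻¹) = 𝐩 π * (𝐭 u * 𝐭 v) * (𝐩 π)⁻¹ := by group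
    _ = 𝐩 π * (𝐭 v * 𝐩 (Equiv.swap u v)) * (𝐩 π)⁻¹ := by rw [tbar_single_mul_tbar_single]
    _ = _ := by group

theorem exists_eq_tbar_mul_pbar (huv : u ≠ v)
    (g : TargetGroup n 1 (KSub.single u) (Equiv.swap u v)) :
    ∃ (o : Option (Fin n)) (τ : Equiv.Perm (Fin n)), g = o.elim 1 (fun a => 𝐭 a) * 𝐩 τ := by
  induction g using TargetGroup.induction_left with
  | perm τ => exact ⟨none, τ, (one_mul _).symm⟩
  | tbar_mul S g ih =>
    obtain ⟨a, rfl⟩ := S.exists_eq_single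
    obtain ⟨o, τ, rfl⟩ := ih
    rcases o with _ | b
    · exact ⟨some a, τ, by simp⟩
    by_cases hab : a = b
    · subst hab
      exact ⟨none, τ, by simp only [Option.elim_some, Option.elim_none, ← mul_assoc, tbar_mul_self]⟩
    · obtain ⟨ρ, hρ⟩ := exists_tbar_mul_tbar_eq huv hab
      exact ⟨some b, ρ * τ, by simp [← mul_assoc, hρ]⟩

end Transposition

/-- For every `n ≥ 2`, in the target group `G_A(n)`, the image of the control
group `Sym(Fin n)` under the canonical quotient map has (finite) index at most `n + 1`. -/
theorem targetGroup_A_controlGroup_index_le (n : ℕ) (hn : 2 ≤ n) :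
    0 < (pbar (n := n) (k := 1) ⟨{⟨0, by omega⟩}, Finset.card_singleton _⟩
          (Equiv.swap ⟨0, by omega⟩ ⟨1, by omega⟩)).range.index ∧
      (pbar (n := n) (k := 1) ⟨{⟨0, by omega⟩}, Finset.card_singleton _⟩
          (Equiv.swap ⟨0, by omega⟩ ⟨1, by omega⟩)).range.index ≤ n + 1 := by
  have huv : (⟨0, by omega⟩ : Fin n) ≠ ⟨1, by omega⟩ := by simp
  obtain ⟨hpos, hle⟩ := Subgroup.index_pos_and_le_card_of_forall_eq_mul
    (H := (pbar (KSub.single _) (Equiv.swap _ _)).range) _ fun g => by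
      obtain ⟨o, τ, hg⟩ := exists_eq_tbar_mul_pbar huv g
      exact ⟨o, _, ⟨τ, rfl⟩, hg⟩
  exact ⟨hpos, hle.trans_eq (by simp)⟩
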